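/- arXiv:2010.00402 — 6 statements merged into one kernel-verified Lean document; each statement's English description precedes it below -/
import Mathlib

section
/- Let (Z,T) be a (1+ε,κ)-quasi-isometric pair as above, with M the diameter of T and m the length of the shortest edge of T not incident to a leaf. If m > (3ε/2)M + (3/2)κ + δ, then Z and T are in LCA agreement: for every triple of leaves i,j,k with {i,j|k} in T, the continuous LCA depths satisfy d_o(z_i∨z_j) > max{d_o(z_i∨z_k), d_o(z_j∨z_k)}. -/
/-- LCA agreement under a quasi-isometry.  Setup as in the depth-difference bound:
`(Z,T)` a `(1+ε,κ)`-quasi-isometric pair with base point `z 0`, continuous LCA depth `dO`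
within `δ` of the Gromov product, tree LCA depth `d0T` given by the Gromov product in the
tree, diameter bound `M`.  The relation `rel i j k` encodes `{i,j|k}` in the binary tree
`T`: the internal nodes `i∨j` and `i∨j∨k = i∨k = j∨k` are distinct and at tree-distance at
least `m`, so `d0T i j − d0T i k ≥ m` and `d0T i j − d0T j k ≥ m`.  If
`m > (3ε/2)M + (3/2)κ + δ`, then `Z` and `T` are in LCA agreement: whenever `{i,j|k}`
holds, `dO i j > max{dO i k, dO j k}`. -/
theorem lca_agreement_of_quasi_isometry {X : Type*} [MetricSpace X]
    (n : ℕ) (z : Fin (n + 1) → X) (dT : Fin (n + 1) → Fin (n + 1) → ℝ)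
    (ε κ δ M m : ℝ) (hε : 0 ≤ ε) (hκ : 0 ≤ κ) (hδ : 0 ≤ δ)
    (hdT : ∀ i j, 0 ≤ dT i j) (hM : ∀ i j, dT i j ≤ M)
    (hquasi : ∀ i j, dT i j ≤ dist (z i) (z j) ∧
      dist (z i) (z j) ≤ (1 + ε) * dT i j + κ)
    (dO : Fin (n + 1) → Fin (n + 1) → ℝ)
    (hgromov : ∀ i j,
      (dist (z i) (z 0) + dist (z j) (z 0) - dist (z i) (z j)) / 2 ≤ dO i j ∧
      dO i j ≤ (dist (z i) (z 0) + dist (z j) (z 0) - dist (z i) (z j)) / 2 + δ)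
    (d0T : Fin (n + 1) → Fin (n + 1) → ℝ)
    (hd0T : ∀ i j, d0T i j = (dT 0 i + dT 0 j - dT i j) / 2)
    (rel : Fin (n + 1) → Fin (n + 1) → Fin (n + 1) → Prop)
    (hrel : ∀ i j k, rel i j k → m ≤ d0T i j - d0T i k ∧ m ≤ d0T i j - d0T j k)
    (hm : 3 * ε / 2 * M + 3 / 2 * κ + δ < m) :
    ∀ i j k : Fin (n + 1), i ≠ 0 → j ≠ 0 → k ≠ 0 → rel i j k →
      max (dO i k) (dO j k) < dO i j := by
  intro i j k _ _ _ hr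
  obtain ⟨h1, h2⟩ := hrel i j k hr
  have key : ∀ a b : Fin (n + 1),
      d0T a b - (ε * M + κ) / 2 ≤ dO a b ∧ dO a b ≤ d0T a b + ε * M + κ + δ := by
    intro a b
    have hg := hgromov a b
    have hq0a := hquasi 0 a
    have hq0b := hquasi 0 b
    have hqab := hquasi a b
    have hMa := hM 0 a
    have hMb := hM 0 b
    have hda : dist (z a) (z 0) = dist (z 0) (z a) := dist_comm _ _
    have hdb : dist (z b) (z 0) = dist (z 0) (z b) := dist_comm _ _
    have hεa : ε * dT 0 a ≤ ε * M := by nlinarith [hdT 0 a]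
    have hεb : ε * dT 0 b ≤ ε * M := by nlinarith [hdT 0 b]
    have hεab : ε * dT a b ≤ ε * M := by nlinarith [hdT a b, hM a b]
    rw [hd0T]
    constructor
    · nlinarith [hg.1, hq0a.1, hq0b.1, hqab.2, hεab]
    · nlinarith [hg.2, hq0a.2, hq0b.2, hqab.1]
  have kij := key i j
  have kik := key i k
  have kjk := key j k
  rw [max_lt_iff]
  constructor <;> nlinarith
end

section
/- Any tree T with n nodes (not necessarily binary) can be converted into a binary tree T'' whose leaves include all original nodes, such that for any original nodes i,j: d_{T''}(i,j) ≤ d_T(i,j) ≤ d_{T''}(i,j) + 2cn, where c > 0 is any constant smaller than (minimum edge length of T)/n. -/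
open SimpleGraph

/-- The unique path between two vertices of a tree. -/
noncomputable def treePath {V : Type*} {G : SimpleGraph V} (hT : G.IsTree) (u v : V) :
    G.Walk u v :=
  (hT.existsUnique_path u v).choose

/-- The shortest-path metric of a tree with edge weights `w`. -/
noncomputable def treeDist {V : Type*} {G : SimpleGraph V} (hT : G.IsTree)
    (w : Sym2 V → ℝ) (u v : V) : ℝ :=
  ((treePath hT u v).edges.map w).sum

section basic
variable {V : Type*} {G : SimpleGraph V}

lemma treePath_isPath (hT : G.IsTree) (u v : V) : (treePath hT u v).IsPath :=
  (hT.existsUnique_path u v).choose_spec.1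

lemma treeDist_eq (hT : G.IsTree) (w : Sym2 V → ℝ) {u v : V} (p : G.Walk u v)
    (hp : p.IsPath) : treeDist hT w u v = (p.edges.map w).sum := by
  have h := (hT.existsUnique_path u v).choose_spec
  have hpp : p = (hT.existsUnique_path u v).choose := h.2 p hp
  rw [treeDist, treePath, ← hpp]

lemma treeDist_self (hT : G.IsTree) (w : Sym2 V → ℝ) (u : V) : treeDist hT w u u = 0 := by
  rw [treeDist_eq hT w Walk.nil Walk.IsPath.nil]
  simp

lemma treeDist_comm (hT : G.IsTree) (w : Sym2 V → ℝ) (u v : V) :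
    treeDist hT w u v = treeDist hT w v u := by
  rw [treeDist_eq hT w (treePath hT v u).reverse (treePath_isPath hT v u).reverse]
  rw [Walk.edges_reverse, List.map_reverse, List.sum_reverse, treeDist]

/-- A path between two vertices distinct from a degree-one vertex `ℓ` avoids `ℓ`. -/
lemma leaf_not_mem_support {ℓ u : V} (hn : G.neighborSet ℓ = {u}) {a b : V}
    (ha : a ≠ ℓ) (hb : b ≠ ℓ) {p : G.Walk a b} (hp : p.IsPath) : ℓ ∉ p.support := by
  classical
  intro hmem
  have huℓ : u ≠ ℓ := by
    intro h; subst h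
    exact G.irrefl (by rw [← mem_neighborSet, hn]; rfl)
  have hspec := p.take_spec hmem
  have hu1 : u ∈ (p.takeUntil ℓ hmem).support := by
    have key : u ∈ (p.takeUntil ℓ hmem).reverse.support := by
      cases hq : (p.takeUntil ℓ hmem).reverse with
      | nil => exact absurd rfl ha
      | @cons _ z _ h q =>
          have hz : z ∈ G.neighborSet ℓ := h
          rw [hn, Set.mem_singleton_iff] at hz
          rw [Walk.support_cons]
          right
          rw [← hz]
          exact Walk.start_mem_support q
    simpa [Walk.support_reverse] using key
  have hu2 : u ∈ (p.dropUntil ℓ hmem).support.tail := by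
    cases hq : (p.dropUntil ℓ hmem) with
    | nil => exact absurd rfl hb
    | @cons _ z _ h q =>
        have hz : z ∈ G.neighborSet ℓ := h
        rw [hn, Set.mem_singleton_iff] at hz
        rw [Walk.support_cons, List.tail_cons, ← hz]
        exact Walk.start_mem_support q
  have hnodup := hp.support_nodup
  rw [← hspec, Walk.support_append] at hnodup
  exact (List.disjoint_of_nodup_append hnodup) hu1 hu2

/-- Lift a walk whose support lies in the range of an induced embedding. -/
lemma walk_lift {V₀ : Type*} {W : Type*} {G₀ : SimpleGraph V₀} {H : SimpleGraph W}
    (φ : G₀ →g H) (hinj : Function.Injective φ)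
    (hrefl : ∀ a b, H.Adj (φ a) (φ b) → G₀.Adj a b)
    {x y : W} (p : H.Walk x y) :
    (∀ z ∈ p.support, ∃ a, φ a = z) →
      ∀ {a b : V₀} (ha : φ a = x) (hb : φ b = y),
        ∃ q : G₀.Walk a b, p = (q.map φ).copy ha hb := by
  induction p with
  | nil =>
      intro hsup a b ha hb
      have hab : a = b := hinj (ha.trans hb.symm)
      subst hab
      subst ha
      exact ⟨Walk.nil, by simp⟩
  | @cons u z y h p ih =>
      intro hsup a b ha hb
      subst ha; subst hb
      obtain ⟨a', ha'⟩ := hsup z (by simp [Walk.support_cons])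
      subst ha'
      obtain ⟨q', hq'⟩ := ih (fun w hw => hsup w (by simp [Walk.support_cons, hw])) rfl rfl
      refine ⟨Walk.cons (hrefl _ _ h) q', ?_⟩
      simp only [Walk.copy_rfl_rfl] at hq' ⊢
      rw [hq']
      rfl

/-- Transfer `treeDist` along an injective graph homomorphism between trees. -/
lemma treeDist_map {V₀ W : Type*} {G₀ : SimpleGraph V₀} {H : SimpleGraph W}
    (hT₀ : G₀.IsTree) (hT : H.IsTree) (φ : G₀ →g H) (hinj : Function.Injective φ)
    (w : Sym2 W → ℝ) (a b : V₀) :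
    treeDist hT w (φ a) (φ b) =
      treeDist hT₀ (fun e => w (Sym2.map φ e)) a b := by
  have hp : ((treePath hT₀ a b).map φ).IsPath :=
    Walk.map_isPath_of_injective hinj (treePath_isPath hT₀ a b)
  rw [treeDist_eq hT w _ hp, treeDist_eq hT₀ _ _ (treePath_isPath hT₀ a b),
    Walk.edges_map, List.map_map]
  rfl

end basic

section addLeaf

variable {V : Type} (G : SimpleGraph V) (x : V)

/-- Attach a new pendant vertex (`none`) to the vertex `x`. -/
def addLeaf : SimpleGraph (Option V) where
  Adj o₁ o₂ := (∃ a b, o₁ = some a ∧ o₂ = some b ∧ G.Adj a b) ∨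
    (o₁ = none ∧ o₂ = some x) ∨ (o₁ = some x ∧ o₂ = none)
  symm := by
    constructor
    rintro o₁ o₂ (⟨a, b, rfl, rfl, h⟩ | ⟨rfl, rfl⟩ | ⟨rfl, rfl⟩)
    · exact Or.inl ⟨b, a, rfl, rfl, h.symm⟩
    · exact Or.inr (Or.inr ⟨rfl, rfl⟩)
    · exact Or.inr (Or.inl ⟨rfl, rfl⟩)
  loopless := by
    constructor
    rintro o (⟨a, b, rfl, hb, h⟩ | ⟨rfl, h⟩ | ⟨h, h'⟩)
    · exact G.irrefl ((Option.some_injective _ hb.symm) ▸ h)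
    · cases h
    · exact absurd (h.symm.trans h') (by simp)

variable {G x}

@[simp] lemma addLeaf_adj_some_some {a b : V} :
    (addLeaf G x).Adj (some a) (some b) ↔ G.Adj a b := by
  constructor
  · rintro (⟨a', b', ha, hb, h⟩ | ⟨h, _⟩ | ⟨_, h⟩)
    · cases ha; cases hb; exact h
    · cases h
    · cases h
  · exact fun h => Or.inl ⟨a, b, rfl, rfl, h⟩

@[simp] lemma addLeaf_adj_none_left {o : Option V} :
    (addLeaf G x).Adj none o ↔ o = some x := by
  constructor
  · rintro (⟨a', b', ha, hb, h⟩ | ⟨_, h⟩ | ⟨h, _⟩)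
    · cases ha
    · exact h
    · cases h
  · rintro rfl; exact Or.inr (Or.inl ⟨rfl, rfl⟩)

@[simp] lemma addLeaf_adj_none_right {o : Option V} :
    (addLeaf G x).Adj o none ↔ o = some x :=
  ⟨fun h => addLeaf_adj_none_left.mp h.symm, fun h => (addLeaf_adj_none_left.mpr h).symm⟩

/-- The embedding of `G` into `addLeaf G x`. -/
@[reducible]
def someHom : G →g addLeaf G x :=
  ⟨some, fun h => Or.inl ⟨_, _, rfl, rfl, h⟩⟩

lemma someHom_injective : Function.Injective (someHom (G := G) (x := x)) :=
  Option.some_injective _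

@[simp] lemma someHom_apply (a : V) : someHom (G := G) (x := x) a = some a := rfl

lemma addLeaf_refl : ∀ a b, (addLeaf G x).Adj (someHom (G := G) (x := x) a)
    (someHom (G := G) (x := x) b) → G.Adj a b :=
  fun _ _ h => addLeaf_adj_some_some.mp h

lemma addLeaf_neighborSet_none :
    (addLeaf G x).neighborSet none = {some x} := by
  ext o; simp [mem_neighborSet]

lemma addLeaf_neighborSet_some {y : V} (hy : y ≠ x) :
    (addLeaf G x).neighborSet (some y) = some '' G.neighborSet y := by
  ext o
  cases o with
  | none => simp [mem_neighborSet, hy]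
  | some z => simp [mem_neighborSet]

lemma addLeaf_neighborSet_x :
    (addLeaf G x).neighborSet (some x) = insert none (some '' G.neighborSet x) := by
  ext o
  cases o with
  | none => simp [mem_neighborSet]
  | some z => simp [mem_neighborSet]

lemma addLeaf_isTree (hT : G.IsTree) : (addLeaf G x).IsTree := by
  rw [isTree_iff_existsUnique_path]
  refine ⟨⟨none⟩, ?_⟩
  have huniq : ∀ (a b : V) (p : (addLeaf G x).Walk (some a) (some b)), p.IsPath →
      p = (treePath hT a b).map someHom := by
    intro a b p hp
    have hnone : (none : Option V) ∉ p.support :=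
      leaf_not_mem_support addLeaf_neighborSet_none (by simp) (by simp) hp
    obtain ⟨q, hq⟩ := walk_lift someHom someHom_injective addLeaf_refl p
      (fun z hz => by
        cases z with
        | none => exact absurd hz hnone
        | some z' => exact ⟨z', rfl⟩) rfl rfl
    rw [Walk.copy_rfl_rfl] at hq
    have hq_path : q.IsPath := Walk.IsPath.of_map (f := someHom) (hq ▸ hp)
    rw [hq, (hT.existsUnique_path a b).choose_spec.2 q hq_path]
    rfl
  rintro (_ | a) (_ | b)
  · exact ⟨Walk.nil, Walk.IsPath.nil, fun p hp => (Walk.isPath_iff_eq_nil (p := p)).mp hp⟩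
  · -- from none to some b
    refine ⟨Walk.cons (addLeaf_adj_none_left.mpr rfl) ((treePath hT x b).map someHom),
      ?_, ?_⟩
    · simp only [Walk.cons_isPath_iff]
      refine ⟨Walk.map_isPath_of_injective someHom_injective (treePath_isPath hT x b), ?_⟩
      rw [Walk.support_map]
      simp
    · intro p hp
      cases p with
      | @cons _ z _ h p' =>
          have hz : z = some x := addLeaf_adj_none_left.mp h
          subst hz
          have hp' : p'.IsPath := hp.of_cons
          rw [huniq x b p' hp']
  · -- from some a to none
    refine ⟨(Walk.cons (addLeaf_adj_none_left.mpr rfl) ((treePath hT x a).map someHom)).reverse,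
      ?_, ?_⟩
    · exact Walk.IsPath.reverse (by
        simp only [Walk.cons_isPath_iff]
        refine ⟨Walk.map_isPath_of_injective someHom_injective (treePath_isPath hT x a), ?_⟩
        rw [Walk.support_map]
        simp)
    · intro p hp
      have := hp.reverse
      -- p.reverse is a path from none to some a
      have huniq2 : ∀ (q : (addLeaf G x).Walk none (some a)), q.IsPath →
          q = Walk.cons (addLeaf_adj_none_left.mpr rfl) ((treePath hT x a).map someHom) := by
        intro q hq
        cases q with
        | @cons _ z _ h q' =>
            have hz : z = some x := addLeaf_adj_none_left.mp h
            subst hz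
            rw [huniq x a q' hq.of_cons]
      have hrev := huniq2 p.reverse this
      calc p = p.reverse.reverse := (Walk.reverse_reverse p).symm
        _ = _ := by rw [hrev]
  · exact ⟨(treePath hT a b).map someHom,
      Walk.map_isPath_of_injective someHom_injective (treePath_isPath hT a b),
      huniq a b⟩

end addLeaf

section addLeafW

variable {V : Type} {G : SimpleGraph V} {x : V}

/-- Weights on `addLeaf G x`: the new pendant edge gets weight `t`. -/
def addLeafWeight (w : Sym2 V → ℝ) (t : ℝ) : Sym2 (Option V) → ℝ :=
  Sym2.lift ⟨fun o₁ o₂ =>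
    match o₁, o₂ with
    | some a, some b => w s(a, b)
    | _, _ => t, by
      intro o₁ o₂
      match o₁, o₂ with
      | some a, some b => simp only; rw [Sym2.eq_swap]
      | some _, none => rfl
      | none, some _ => rfl
      | none, none => rfl⟩

@[simp] lemma addLeafWeight_some_some (w : Sym2 V → ℝ) (t : ℝ) (a b : V) :
    addLeafWeight w t s(some a, some b) = w s(a, b) := rfl

@[simp] lemma addLeafWeight_none (w : Sym2 V → ℝ) (t : ℝ) (o : Option V) :
    addLeafWeight w t s(none, o) = t := by
  cases o <;> rfl

@[simp] lemma addLeafWeight_map_some (w : Sym2 V → ℝ) (t : ℝ) (e : Sym2 V) :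
    addLeafWeight w t (Sym2.map some e) = w e := by
  induction e using Sym2.ind with
  | _ a b => rfl

lemma addLeafWeight_nonneg (w : Sym2 V → ℝ) (t : ℝ) (hw : ∀ e ∈ G.edgeSet, 0 ≤ w e)
    (ht : 0 ≤ t) : ∀ e ∈ (addLeaf G x).edgeSet, 0 ≤ addLeafWeight w t e := by
  intro e he
  induction e using Sym2.ind with
  | _ o₁ o₂ =>
    rw [mem_edgeSet] at he
    match o₁, o₂ with
    | some a, some b =>
        exact hw s(a, b) (G.mem_edgeSet.mpr (addLeaf_adj_some_some.mp he))
    | none, o => simpa using ht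
    | o, none => rw [Sym2.eq_swap]; simpa using ht

lemma treeDist_addLeaf_some (hT : G.IsTree) (w : Sym2 V → ℝ) (t : ℝ) (a b : V) :
    treeDist (addLeaf_isTree (x := x) hT) (addLeafWeight w t) (some a) (some b) =
      treeDist hT w a b := by
  rw [show (some a : Option V) = someHom (G := G) (x := x) a from rfl,
    show (some b : Option V) = someHom (G := G) (x := x) b from rfl,
    treeDist_map hT (addLeaf_isTree hT) someHom someHom_injective]
  rw [treeDist, treeDist]
  congr 1
  apply List.map_congr_left
  intro e _
  exact addLeafWeight_map_some w t e

lemma treeDist_addLeaf_none (hT : G.IsTree) (w : Sym2 V → ℝ) (t : ℝ) (b : V) :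
    treeDist (addLeaf_isTree (x := x) hT) (addLeafWeight w t) none (some b) =
      t + treeDist hT w x b := by
  have hp : (Walk.cons (addLeaf_adj_none_left.mpr rfl)
      ((treePath hT x b).map (someHom (G := G) (x := x)))).IsPath := by
    simp only [Walk.cons_isPath_iff]
    refine ⟨Walk.map_isPath_of_injective someHom_injective (treePath_isPath hT x b), ?_⟩
    rw [Walk.support_map]
    simp
  rw [show (some b : Option V) = someHom (G := G) (x := x) b from rfl,
    treeDist_eq (addLeaf_isTree hT) _ _ hp]
  rw [Walk.edges_cons, List.map_cons, List.sum_cons, Walk.edges_map, List.map_map]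
  congr 1
  rw [treeDist]
  apply congrArg
  apply List.map_congr_left
  intro e _
  exact addLeafWeight_map_some w t e

lemma addLeaf_ncard_none :
    ((addLeaf G x).neighborSet (none : Option V)).ncard = 1 := by
  rw [addLeaf_neighborSet_none]; simp

lemma addLeaf_ncard_some [Fintype V] {y : V} (hy : y ≠ x) :
    ((addLeaf G x).neighborSet (some y)).ncard = (G.neighborSet y).ncard := by
  rw [addLeaf_neighborSet_some hy, Set.ncard_image_of_injective _ (Option.some_injective _)]

lemma addLeaf_ncard_x [Fintype V] :
    ((addLeaf G x).neighborSet (some x)).ncard = (G.neighborSet x).ncard + 1 := by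
  rw [addLeaf_neighborSet_x, Set.ncard_insert_of_notMem (by simp) (Set.toFinite _),
    Set.ncard_image_of_injective _ (Option.some_injective _)]

end addLeafW

section leaf

lemma exists_leaf {V : Type*} [Fintype V] {G : SimpleGraph V} (hT : G.IsTree)
    (h2 : 1 < Fintype.card V) : ∃ ℓ u : V, G.neighborSet ℓ = {u} := by
  classical
  have hcard := hT.card_edgeFinset
  have hsum := G.sum_degrees_eq_twice_card_edges
  have hdegpos : ∀ v : V, 1 ≤ G.degree v := by
    intro v
    have : Nontrivial V := Fintype.one_lt_card_iff_nontrivial.mp h2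
    obtain ⟨y, hy⟩ := exists_ne v
    obtain ⟨p⟩ := hT.isConnected.preconnected v y
    cases p with
    | nil => exact absurd rfl hy.symm
    | cons h _ => exact G.degree_pos_iff_exists_adj v |>.mpr ⟨_, h⟩
  by_contra hcon
  push_neg at hcon
  have hge : ∀ v : V, 2 ≤ G.degree v := by
    intro v
    rcases Nat.lt_or_ge (G.degree v) 2 with h | h
    · interval_cases hdeg : G.degree v
      · exact absurd (hdegpos v) (by omega)
      · exfalso
        obtain ⟨u, hu⟩ := Finset.card_eq_one.mp hdeg
        refine hcon v u ?_
        have h2 : (G.neighborSet v).toFinset = {u} := by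
          rw [← G.neighborFinset_def]; exact hu
        rw [← Set.coe_toFinset (G.neighborSet v), h2]
        simp
    · exact h
  have h1 : 2 * Fintype.card V ≤ ∑ v : V, G.degree v := by
    rw [two_mul, ← Finset.card_univ]
    calc Fintype.card V + Fintype.card V ≤ ∑ _v : V, 2 := by
          rw [Finset.sum_const, Finset.card_univ, smul_eq_mul]; omega
      _ ≤ ∑ v : V, G.degree v := Finset.sum_le_sum fun v _ => hge v
  omega

end leaf

theorem binary_aux (n : ℕ) : ∀ {V : Type u} [Fintype V] {G : SimpleGraph V} (hT : G.IsTree)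
    (w : Sym2 V → ℝ), (∀ e ∈ G.edgeSet, 0 ≤ w e) → Fintype.card V ≤ n →
    ∃ (V' : Type) (_ : Fintype V') (G' : SimpleGraph V') (hT' : G'.IsTree)
      (w' : Sym2 V' → ℝ) (f : V → V'),
      Function.Injective f ∧ (∀ e ∈ G'.edgeSet, 0 ≤ w' e) ∧
      (∀ v, (G'.neighborSet (f v)).ncard = 1) ∧
      (∀ v' : V', (G'.neighborSet v').ncard = 1 ∨ (G'.neighborSet v').ncard = 3) ∧
      (∀ i j, treeDist hT' w' (f i) (f j) = treeDist hT w i j) := by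
  induction n with
  | zero =>
      intro V _ G hT w _ hcard
      exact absurd (Fintype.card_pos_iff.mpr hT.isConnected.nonempty) (by omega)
  | succ n ih =>
      intro V _ G hT w hw hcard
      classical
      rcases Nat.lt_or_ge 1 (Fintype.card V) with h2 | h1
      · -- inductive step: remove a leaf ℓ
        obtain ⟨ℓ, u, hns⟩ := exists_leaf hT h2
        have huℓ : u ≠ ℓ := by
          intro h; subst h
          exact G.irrefl (by rw [← mem_neighborSet, hns]; rfl)
        have hadj : G.Adj ℓ u := by
          rw [← mem_neighborSet, hns]; rfl
        set V₀ := {v : V // v ≠ ℓ} with hV₀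
        let G₀ : SimpleGraph V₀ := G.comap (Subtype.val)
        let valHom : G₀ →g G := ⟨Subtype.val, id⟩
        have hvinj : Function.Injective valHom := Subtype.val_injective
        have hvrefl : ∀ a b : V₀, G.Adj (valHom a) (valHom b) → G₀.Adj a b := fun _ _ h => h
        have hT₀ : G₀.IsTree := by
          rw [isTree_iff_existsUnique_path]
          refine ⟨⟨⟨u, huℓ⟩⟩, ?_⟩
          intro a b
          have hp := treePath_isPath hT a.1 b.1
          have hnot : ℓ ∉ (treePath hT a.1 b.1).support :=
            leaf_not_mem_support hns a.2 b.2 hp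
          obtain ⟨q, hq⟩ := walk_lift valHom hvinj hvrefl (treePath hT a.1 b.1)
            (fun z hz => ⟨⟨z, fun h => hnot (h ▸ hz)⟩, rfl⟩) rfl rfl
          rw [Walk.copy_rfl_rfl] at hq
          refine ⟨q, Walk.IsPath.of_map (f := valHom) (hq ▸ hp), ?_⟩
          intro q' hq'
          apply Walk.map_injective_of_injective hvinj
          exact (hT.existsUnique_path a.1 b.1).unique
            (Walk.map_isPath_of_injective hvinj hq')
            (Walk.map_isPath_of_injective hvinj (Walk.IsPath.of_map (f := valHom) (hq ▸ hp)))
        let w₀ : Sym2 V₀ → ℝ := fun e => w (Sym2.map valHom e)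
        have hw₀ : ∀ e ∈ G₀.edgeSet, 0 ≤ w₀ e := by
          intro e he
          induction e using Sym2.ind with
          | _ a b => exact hw s(a.1, b.1) (G.mem_edgeSet.mpr he)
        have hdist₀ : ∀ a b : V₀, treeDist hT₀ w₀ a b = treeDist hT w a.1 b.1 :=
          fun a b => (treeDist_map hT₀ hT valHom hvinj w a b).symm
        have hdistℓ : ∀ b : V₀, treeDist hT w ℓ b.1 =
            w s(ℓ, u) + treeDist hT₀ w₀ ⟨u, huℓ⟩ b := by
          intro b
          have hp : (Walk.cons hadj ((treePath hT₀ ⟨u, huℓ⟩ b).map valHom)).IsPath := by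
            simp only [Walk.cons_isPath_iff]
            refine ⟨Walk.map_isPath_of_injective hvinj (treePath_isPath hT₀ _ b), ?_⟩
            rw [Walk.support_map]
            simp only [List.mem_map]
            rintro ⟨z, _, hz⟩
            exact z.2 hz
          rw [show (b : V) = valHom b from rfl, treeDist_eq hT w _ hp, Walk.edges_cons, List.map_cons, List.sum_cons,
            Walk.edges_map, List.map_map]
          congr 1
        have hcard₀ : Fintype.card V₀ ≤ n := by
          have h3 : Fintype.card V₀ < Fintype.card V :=
            Fintype.card_subtype_lt (p := fun v : V => v ≠ ℓ) (x := ℓ) (by simp)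
          omega
        obtain ⟨V₀', i₀, G₀', hT₀', w₀', f₀, hf₀inj, hw₀', hleaf₀, hdeg₀, hd₀⟩ :=
          ih hT₀ w₀ hw₀ hcard₀
        letI := i₀
        set x := f₀ ⟨u, huℓ⟩ with hx
        let G₁ := addLeaf G₀' x
        have hT₁ : G₁.IsTree := addLeaf_isTree hT₀'
        let w₁ := addLeafWeight w₀' 0
        let G₂ := addLeaf G₁ (some x)
        have hT₂ : G₂.IsTree := addLeaf_isTree hT₁
        let w₂ := addLeafWeight w₁ (w s(ℓ, u))
        let inner : V₀ → Option V₀' := fun a => if a = ⟨u, huℓ⟩ then none else some (f₀ a)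
        let f : V → Option (Option V₀') := fun v =>
          if h : v = ℓ then none else some (inner ⟨v, h⟩)
        have hw₁ : ∀ e ∈ G₁.edgeSet, 0 ≤ w₁ e := addLeafWeight_nonneg w₀' 0 hw₀' le_rfl
        have hw₂ : ∀ e ∈ G₂.edgeSet, 0 ≤ w₂ e :=
          addLeafWeight_nonneg w₁ _ hw₁ (hw _ (G.mem_edgeSet.mpr hadj))
        -- distance claims
        have claim1 : ∀ a b : V₀, treeDist hT₁ w₁ (inner a) (inner b) =
            treeDist hT₀ w₀ a b := by
          intro a b
          by_cases ha : a = ⟨u, huℓ⟩ <;> by_cases hb : b = ⟨u, huℓ⟩ <;>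
            simp only [inner, ha, hb, if_pos, if_neg, ite_true, ite_false]
          · subst ha; subst hb; rw [treeDist_self, treeDist_self]
          · subst ha
            rw [treeDist_addLeaf_none hT₀' w₀' 0 (f₀ b), hx, hd₀, zero_add]
          · subst hb
            rw [treeDist_comm, treeDist_addLeaf_none hT₀' w₀' 0 (f₀ a), hx, hd₀,
              zero_add, treeDist_comm hT₀]
          · rw [treeDist_addLeaf_some hT₀' w₀' 0 (f₀ a) (f₀ b), hd₀]
        have claim2 : ∀ b : V₀, treeDist hT₁ w₁ (some x) (inner b) =
            treeDist hT₀ w₀ ⟨u, huℓ⟩ b := by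
          intro b
          by_cases hb : b = ⟨u, huℓ⟩ <;>
            simp only [inner, hb, if_pos, if_neg, ite_true, ite_false]
          · subst hb
            rw [treeDist_comm, treeDist_addLeaf_none hT₀' w₀' 0 x, treeDist_self,
              treeDist_self]
            simp
          · rw [treeDist_addLeaf_some hT₀' w₀' 0 x (f₀ b), hx, hd₀]
        refine ⟨Option (Option V₀'), inferInstance, G₂, hT₂, w₂, f, ?_, hw₂, ?_, ?_, ?_⟩
        · -- injectivity
          intro v₁ v₂ heq
          by_cases h₁ : v₁ = ℓ <;> by_cases h₂ : v₂ = ℓ <;>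
            simp only [f, h₁, h₂, dite_true, dite_false, dif_pos, dif_neg] at heq
          · exact h₁.trans h₂.symm
          · exact absurd heq (by simp)
          · exact absurd heq (by simp)
          · have hin : inner ⟨v₁, h₁⟩ = inner ⟨v₂, h₂⟩ := Option.some_injective _ heq
            by_cases hu₁ : (⟨v₁, h₁⟩ : V₀) = ⟨u, huℓ⟩ <;>
              by_cases hu₂ : (⟨v₂, h₂⟩ : V₀) = ⟨u, huℓ⟩ <;>
              simp only [inner, hu₁, hu₂, ite_true, ite_false, if_pos, if_neg] at hin
            · have e1 : v₁ = u := congrArg Subtype.val hu₁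
              have e2 : v₂ = u := congrArg Subtype.val hu₂
              rw [e1, e2]
            · exact absurd hin (by simp)
            · exact absurd hin (by simp)
            · have := hf₀inj (Option.some_injective _ hin)
              exact congrArg Subtype.val this
        · -- f v is a leaf
          intro v
          by_cases h : v = ℓ <;> simp only [f, h, dite_true, dite_false, dif_pos, dif_neg]
          · exact addLeaf_ncard_none
          · by_cases hu' : (⟨v, h⟩ : V₀) = ⟨u, huℓ⟩ <;>
              simp only [inner, hu', ite_true, ite_false, if_pos, if_neg]
            · rw [addLeaf_ncard_some (by simp : (none : Option V₀') ≠ some x)]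
              exact addLeaf_ncard_none
            · have hne : f₀ ⟨v, h⟩ ≠ x := fun hfx => hu' (hf₀inj hfx)
              rw [addLeaf_ncard_some (by simpa using hne),
                addLeaf_ncard_some (by simpa using hne)]
              exact hleaf₀ _
        · -- all degrees 1 or 3
          rintro (_ | _ | y)
          · exact Or.inl addLeaf_ncard_none
          · exact Or.inl (by
              rw [addLeaf_ncard_some (by simp : (none : Option V₀') ≠ some x)]
              exact addLeaf_ncard_none)
          · by_cases hy : y = x
            · subst hy
              refine Or.inr ?_
              rw [addLeaf_ncard_x, addLeaf_ncard_x, hleaf₀ ⟨u, huℓ⟩]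
            · rcases hdeg₀ y with h | h <;>
                [exact Or.inl (by
                  rw [addLeaf_ncard_some (by simpa using hy),
                    addLeaf_ncard_some (by simpa using hy)]; exact h);
                exact Or.inr (by
                  rw [addLeaf_ncard_some (by simpa using hy),
                    addLeaf_ncard_some (by simpa using hy)]; exact h)]
        · -- distances
          intro i j
          by_cases hi : i = ℓ <;> by_cases hj : j = ℓ <;>
            simp only [f, hi, hj, dite_true, dite_false, dif_pos, dif_neg]
          · subst hi; subst hj; rw [treeDist_self, treeDist_self]
          · subst hi
            rw [treeDist_addLeaf_none hT₁ w₁ _ (inner ⟨j, hj⟩), claim2,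
              show treeDist hT w i j = treeDist hT w i ((⟨j, hj⟩ : V₀) : V) from rfl,
              hdistℓ ⟨j, hj⟩]
          · subst hj
            rw [show treeDist hT w i j = treeDist hT w j ((⟨i, hi⟩ : V₀) : V) from
                treeDist_comm hT w i j,
              hdistℓ ⟨i, hi⟩, treeDist_comm hT₂,
              treeDist_addLeaf_none hT₁ w₁ _ (inner ⟨i, hi⟩), claim2]
          · rw [treeDist_addLeaf_some hT₁ w₁, claim1, hdist₀]
      · -- base case: a single vertex
        have hsub : Subsingleton V := by
          rcases Fintype.card_le_one_iff_subsingleton.mp h1 with h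
          exact h
        have hbot : (⊥ : SimpleGraph PUnit).IsTree := by
          constructor
          · constructor
            intro a b
            rw [Subsingleton.elim a b]
          · exact isAcyclic_bot
        refine ⟨Option PUnit, inferInstance, addLeaf ⊥ PUnit.unit, addLeaf_isTree hbot,
          addLeafWeight (fun _ => 0) 0, fun _ => none, ?_, ?_, ?_, ?_, ?_⟩
        · exact fun a b _ => Subsingleton.elim a b
        · exact addLeafWeight_nonneg _ 0 (fun _ _ => le_rfl) le_rfl
        · exact fun _ => addLeaf_ncard_none
        · rintro (_ | ⟨⟩)
          · exact Or.inl addLeaf_ncard_none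
          · refine Or.inl ?_
            rw [addLeaf_ncard_x]
            simp [neighborSet]
        · intro i j
          rw [Subsingleton.elim i j, treeDist_self, treeDist_self]

/-- Any weighted tree `T` on `n` nodes (not necessarily binary) can be converted into a
binary tree `T''` (all degrees `1` or `3`, except possibly one node of degree `2`
designated as the root), with nonnegative edge weights, whose leaves include all original
nodes, such that for all original nodes `i, j`:
`d_{T''}(i,j) ≤ d_T(i,j) ≤ d_{T''}(i,j) + 2cn`, for any constant `c` with
`0 < c` and `c·n` smaller than every edge weight of `T`. -/
theorem tree_to_binary_tree {V : Type*} [Fintype V] {G : SimpleGraph V} (hT : G.IsTree)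
    (w : Sym2 V → ℝ) (c : ℝ) (hc : 0 < c)
    (hcw : ∀ e ∈ G.edgeSet, c * (Fintype.card V : ℝ) < w e) :
    ∃ (V' : Type) (_ : Fintype V') (G' : SimpleGraph V') (hT' : G'.IsTree)
      (w' : Sym2 V' → ℝ) (f : V → V'),
      Function.Injective f ∧
      (∀ e ∈ G'.edgeSet, 0 ≤ w' e) ∧
      (∀ v : V, (G'.neighborSet (f v)).ncard = 1) ∧
      (∃ root : V', ∀ v : V', (G'.neighborSet v).ncard = 1 ∨
        (G'.neighborSet v).ncard = 3 ∨ (v = root ∧ (G'.neighborSet v).ncard = 2)) ∧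
      (∀ i j : V,
        treeDist hT' w' (f i) (f j) ≤ treeDist hT w i j ∧
        treeDist hT w i j ≤ treeDist hT' w' (f i) (f j) +
          2 * c * (Fintype.card V : ℝ)) := by
  have hw : ∀ e ∈ G.edgeSet, 0 ≤ w e := by
    intro e he
    refine le_of_lt (lt_of_le_of_lt ?_ (hcw e he))
    positivity
  obtain ⟨V', i', G', hT', w', f, hfinj, hw', hleaf, hdeg, hd⟩ :=
    binary_aux (Fintype.card V) hT w hw le_rfl
  have hne : Nonempty V := hT.isConnected.nonempty
  obtain ⟨v₀⟩ := hne
  refine ⟨V', i', G', hT', w', f, hfinj, hw', hleaf,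
    ⟨f v₀, fun v => (hdeg v).elim Or.inl (fun h => Or.inr (Or.inl h))⟩, ?_⟩
  intro i j
  constructor
  · exact le_of_eq (hd i j)
  · rw [hd i j]
    have : 0 ≤ 2 * c * (Fintype.card V : ℝ) := by positivity
    linarith
end

section
/- Let (i,j,k) be a triple with real similarities w_{ij}, w_{ik}, w_{jk} and real depths d₁ = d_o(z_i∨z_j), d₂ = d_o(z_i∨z_k), d₃ = d_o(z_j∨z_k) with d₁ ≥ max{d₂, d₃} + 1. Let τ > 0 and define the softmax-weighted similarity w_soft = (w_{ij}e^{d₁/τ} + w_{ik}e^{d₂/τ} + w_{jk}e^{d₃/τ})/(e^{d₁/τ} + e^{d₂/τ} + e^{d₃/τ}). Then |w_{ij} − w_soft| ≤ 4·max{|w_{ij}|, |w_{ik}|, |w_{jk}|}·e^{−1/τ}. -/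
/-- Softmax selection error bound.  If the depth `d₁` exceeds `max{d₂,d₃}` by at least `1`,
then the temperature-`τ` softmax-weighted similarity is within
`4·max{|w_{ij}|,|w_{ik}|,|w_{jk}|}·e^{−1/τ}` of `w_{ij}`. -/
theorem softmax_selection_error (wij wik wjk d1 d2 d3 τ : ℝ) (hτ : 0 < τ)
    (hd : max d2 d3 + 1 ≤ d1) :
    |wij - (wij * Real.exp (d1 / τ) + wik * Real.exp (d2 / τ) + wjk * Real.exp (d3 / τ)) /
        (Real.exp (d1 / τ) + Real.exp (d2 / τ) + Real.exp (d3 / τ))|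
      ≤ 4 * max |wij| (max |wik| |wjk|) * Real.exp (-1 / τ) := by
  set E1 := Real.exp (d1 / τ) with hE1d
  set E2 := Real.exp (d2 / τ) with hE2d
  set E3 := Real.exp (d3 / τ) with hE3d
  have hE1 : 0 < E1 := Real.exp_pos _
  have hE2 : 0 < E2 := Real.exp_pos _
  have hE3 : 0 < E3 := Real.exp_pos _
  have hS : 0 < E1 + E2 + E3 := by positivity
  set M := max |wij| (max |wik| |wjk|) with hMd
  have hM0 : 0 ≤ M := le_trans (abs_nonneg wij) (le_max_left _ _)
  set c := Real.exp (-1 / τ) with hcd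
  have hc : 0 < c := Real.exp_pos _
  have key : wij - (wij * E1 + wik * E2 + wjk * E3) / (E1 + E2 + E3)
      = ((wij - wik) * E2 + (wij - wjk) * E3) / (E1 + E2 + E3) := by
    field_simp
    ring
  rw [key, abs_div, abs_of_pos hS, div_le_iff₀ hS]
  -- bound E2 and E3 by E1 * c
  have hE2le : E2 ≤ E1 * c := by
    rw [hE1d, hE2d, hcd, ← Real.exp_add]
    apply Real.exp_le_exp.mpr
    rw [← add_div]
    have h := le_max_left d2 d3
    gcongr
    linarith
  have hE3le : E3 ≤ E1 * c := by
    rw [hE1d, hE3d, hcd, ← Real.exp_add]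
    apply Real.exp_le_exp.mpr
    rw [← add_div]
    have h := le_max_right d2 d3
    gcongr
    linarith
  have hwik : |wij - wik| ≤ 2 * M := by
    calc |wij - wik| ≤ |wij| + |wik| := abs_sub _ _
    _ ≤ M + M := add_le_add (le_max_left _ _)
        (le_trans (le_max_left _ _) (le_max_right _ _))
    _ = 2 * M := by ring
  have hwjk : |wij - wjk| ≤ 2 * M := by
    calc |wij - wjk| ≤ |wij| + |wjk| := abs_sub _ _
    _ ≤ M + M := add_le_add (le_max_left _ _)
        (le_trans (le_max_right _ _) (le_max_right _ _))
    _ = 2 * M := by ring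
  calc |(wij - wik) * E2 + (wij - wjk) * E3|
      ≤ |(wij - wik) * E2| + |(wij - wjk) * E3| := abs_add_le _ _
    _ = |wij - wik| * E2 + |wij - wjk| * E3 := by
        rw [abs_mul, abs_mul, abs_of_pos hE2, abs_of_pos hE3]
    _ ≤ (2 * M) * (E1 * c) + (2 * M) * (E1 * c) := by
        exact add_le_add (mul_le_mul hwik hE2le hE2.le (by positivity))
          (mul_le_mul hwjk hE3le hE3.le (by positivity))
    _ = 4 * M * c * E1 := by ring
    _ ≤ 4 * M * c * (E1 + E2 + E3) := by
        have : 0 ≤ 4 * M * c := by positivity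
        nlinarith
end

section
/- For any rooted binary tree T and nonnegative similarities w, Dasgupta's cost satisfies the bounds LB(w) ≤ C_Dasgupta(T;w) ≤ UB(w), where LB(w) = Σ_{i<j<k} min(w_{ij}+w_{ik}, w_{ij}+w_{jk}, w_{ik}+w_{jk}) + 2Σ_{i<j} w_{ij} and UB(w) = Σ_{i<j<k} max(w_{ij}+w_{ik}, w_{ij}+w_{jk}, w_{ik}+w_{jk}) + 2Σ_{i<j} w_{ij}. -/
open Finset in
/-- Bounds on Dasgupta's cost: `LB(w) ≤ C_Dasgupta(T;w) ≤ UB(w)`, where the lower/upper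
bounds replace, in the Wang–Wang triple decomposition, the sum of the two similarities whose
pair has the deepest LCA by the min/max of the three pairwise sums.  The rooted binary tree
`T` is represented through the separation relation `rel i j k = {i,j|k}` (exactly one of the
three relations holds per distinct triple, and it is symmetric in the first two arguments)
and the subtree-leaf-count `leafCnt i j = |leaves(T[i∨j])|` with its binary-tree
characterization. -/
theorem dasgupta_cost_bounds (n : ℕ) (w : Fin n → Fin n → ℝ)
    (hw : ∀ i j, 0 ≤ w i j) (hwsymm : ∀ i j, w i j = w j i)
    (rel : Fin n → Fin n → Fin n → Prop) [inst : ∀ i j k, Decidable (rel i j k)]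
    (hrelsymm : ∀ i j k, rel i j k ↔ rel j i k)
    (hone : ∀ i j k : Fin n, i ≠ j → j ≠ k → i ≠ k →
      (rel i j k ∧ ¬ rel i k j ∧ ¬ rel j k i) ∨
      (¬ rel i j k ∧ rel i k j ∧ ¬ rel j k i) ∨
      (¬ rel i j k ∧ ¬ rel i k j ∧ rel j k i))
    (leafCnt : Fin n → Fin n → ℕ)
    (hleaf : ∀ i j : Fin n, i ≠ j →
      leafCnt i j = 2 + (univ.filter fun k : Fin n => k ≠ i ∧ k ≠ j ∧ ¬ rel i j k).card) :
    ((∑ t ∈ (univ.filter fun t : Fin n × Fin n × Fin n => t.1 < t.2.1 ∧ t.2.1 < t.2.2),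
        min (w t.1 t.2.1 + w t.1 t.2.2) (min (w t.1 t.2.1 + w t.2.1 t.2.2)
          (w t.1 t.2.2 + w t.2.1 t.2.2)))
      + 2 * ∑ p ∈ (univ.filter fun p : Fin n × Fin n => p.1 < p.2), w p.1 p.2
      ≤ ∑ p ∈ (univ.filter fun p : Fin n × Fin n => p.1 < p.2),
          w p.1 p.2 * (leafCnt p.1 p.2 : ℝ))
    ∧
    (∑ p ∈ (univ.filter fun p : Fin n × Fin n => p.1 < p.2),
        w p.1 p.2 * (leafCnt p.1 p.2 : ℝ)
      ≤ (∑ t ∈ (univ.filter fun t : Fin n × Fin n × Fin n => t.1 < t.2.1 ∧ t.2.1 < t.2.2),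
          max (w t.1 t.2.1 + w t.1 t.2.2) (max (w t.1 t.2.1 + w t.2.1 t.2.2)
            (w t.1 t.2.2 + w t.2.1 t.2.2)))
        + 2 * ∑ p ∈ (univ.filter fun p : Fin n × Fin n => p.1 < p.2), w p.1 p.2) := by
  classical
  set F : Fin n → Fin n → Fin n → ℝ :=
    fun i j k => if k ≠ i ∧ k ≠ j ∧ ¬ rel i j k then w i j else 0 with hFdef
  set P := (univ.filter fun p : Fin n × Fin n => p.1 < p.2) with hP
  set T3 := (univ.filter fun t : Fin n × Fin n × Fin n => t.1 < t.2.1 ∧ t.2.1 < t.2.2) with hT3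
  -- pointwise expansion of the cost of one pair
  have hcost : ∀ p ∈ P, w p.1 p.2 * (leafCnt p.1 p.2 : ℝ)
      = 2 * w p.1 p.2 + ∑ k : Fin n, F p.1 p.2 k := by
    intro p hp
    have hlt : p.1 < p.2 := (Finset.mem_filter.mp hp).2
    have hcard : (leafCnt p.1 p.2 : ℝ)
        = 2 + ∑ k : Fin n, (if k ≠ p.1 ∧ k ≠ p.2 ∧ ¬ rel p.1 p.2 k then (1:ℝ) else 0) := by
      rw [hleaf _ _ hlt.ne, Finset.card_filter]
      push_cast
      simp
    rw [hcard, mul_add, Finset.mul_sum]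
    congr 1
    · ring
    · refine Finset.sum_congr rfl fun k _ => ?_
      simp only [hFdef, mul_ite, mul_one, mul_zero]
  -- rewrite the total cost
  have key : ∑ p ∈ P, w p.1 p.2 * (leafCnt p.1 p.2 : ℝ)
      = 2 * ∑ p ∈ P, w p.1 p.2
        + ∑ t ∈ T3, (F t.2.1 t.2.2 t.1 + F t.1 t.2.2 t.2.1 + F t.1 t.2.1 t.2.2) := by
    rw [Finset.sum_congr rfl hcost, Finset.sum_add_distrib, ← Finset.mul_sum]
    congr 1
    -- ⊢ ∑ p ∈ P, ∑ k, F p.1 p.2 k = ∑ t ∈ T3, (...)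
    have hA : ∑ p ∈ P, ∑ k : Fin n, F p.1 p.2 k
        = ∑ t ∈ univ.filter (fun t : Fin n × Fin n × Fin n => t.1 < t.2.1),
            F t.1 t.2.1 t.2.2 := by
      rw [hP]
      simp only [Finset.sum_filter, Fintype.sum_prod_type]
      refine Finset.sum_congr rfl fun a _ => Finset.sum_congr rfl fun b _ => ?_
      split
      · rfl
      · simp
    have hsplit : ∀ t : Fin n × Fin n × Fin n, t.1 < t.2.1 →
        F t.1 t.2.1 t.2.2
        = (if t.2.2 < t.1 then F t.1 t.2.1 t.2.2 else 0)
          + (if t.1 < t.2.2 ∧ t.2.2 < t.2.1 then F t.1 t.2.1 t.2.2 else 0)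
          + (if t.2.1 < t.2.2 then F t.1 t.2.1 t.2.2 else 0) := by
      rintro ⟨a, b, c⟩ hab
      dsimp only at *
      rcases lt_trichotomy c a with h | h | h
      · rw [if_pos h, if_neg (fun hc => lt_asymm h hc.1), if_neg (lt_asymm (h.trans hab))]
        ring
      · subst h
        simp [hFdef, lt_irrefl, lt_asymm hab]
      · rcases lt_trichotomy c b with h' | h' | h'
        · rw [if_neg (lt_asymm h), if_pos ⟨h, h'⟩, if_neg (lt_asymm h')]
          ring
        · subst h'
          simp [hFdef, lt_irrefl, lt_asymm hab, lt_asymm h]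
        · rw [if_neg (lt_asymm h), if_neg (fun hc => lt_asymm h' hc.2), if_pos h']
          ring
    rw [hA, Finset.sum_congr rfl (fun t ht => hsplit t (Finset.mem_filter.mp ht).2),
        Finset.sum_add_distrib, Finset.sum_add_distrib]
    have hB1 : ∑ t ∈ univ.filter (fun t : Fin n × Fin n × Fin n => t.1 < t.2.1),
          (if t.2.2 < t.1 then F t.1 t.2.1 t.2.2 else 0)
        = ∑ t ∈ T3, F t.2.1 t.2.2 t.1 := by
      rw [← Finset.sum_filter, Finset.filter_filter]
      refine Finset.sum_nbij' (fun t => (t.2.2, t.1, t.2.1)) (fun t => (t.2.1, t.2.2, t.1))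
        ?_ ?_ ?_ ?_ ?_
      · intro t ht
        simp only [hT3, Finset.mem_filter, Finset.mem_univ, true_and] at ht ⊢
        exact ⟨ht.2, ht.1⟩
      · intro t ht
        simp only [hT3, Finset.mem_filter, Finset.mem_univ, true_and] at ht ⊢
        exact ⟨ht.2, ht.1⟩
      · intro t _; rfl
      · intro t _; rfl
      · intro t _; rfl
    have hB2 : ∑ t ∈ univ.filter (fun t : Fin n × Fin n × Fin n => t.1 < t.2.1),
          (if t.1 < t.2.2 ∧ t.2.2 < t.2.1 then F t.1 t.2.1 t.2.2 else 0)
        = ∑ t ∈ T3, F t.1 t.2.2 t.2.1 := by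
      rw [← Finset.sum_filter, Finset.filter_filter]
      refine Finset.sum_nbij' (fun t => (t.1, t.2.2, t.2.1)) (fun t => (t.1, t.2.2, t.2.1))
        ?_ ?_ ?_ ?_ ?_
      · intro t ht
        simp only [hT3, Finset.mem_filter, Finset.mem_univ, true_and] at ht ⊢
        exact ⟨ht.2.1, ht.2.2⟩
      · intro t ht
        simp only [hT3, Finset.mem_filter, Finset.mem_univ, true_and] at ht ⊢
        exact ⟨ht.1.trans ht.2, ht.1, ht.2⟩
      · intro t _; rfl
      · intro t _; rfl
      · intro t _; rfl
    have hB3 : ∑ t ∈ univ.filter (fun t : Fin n × Fin n × Fin n => t.1 < t.2.1),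
          (if t.2.1 < t.2.2 then F t.1 t.2.1 t.2.2 else 0)
        = ∑ t ∈ T3, F t.1 t.2.1 t.2.2 := by
      rw [← Finset.sum_filter, Finset.filter_filter, hT3]
    rw [hB1, hB2, hB3, ← Finset.sum_add_distrib, ← Finset.sum_add_distrib]
  -- pointwise bounds on triples
  have hpt : ∀ t ∈ T3,
      (min (w t.1 t.2.1 + w t.1 t.2.2) (min (w t.1 t.2.1 + w t.2.1 t.2.2)
          (w t.1 t.2.2 + w t.2.1 t.2.2))
        ≤ F t.2.1 t.2.2 t.1 + F t.1 t.2.2 t.2.1 + F t.1 t.2.1 t.2.2)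
      ∧ (F t.2.1 t.2.2 t.1 + F t.1 t.2.2 t.2.1 + F t.1 t.2.1 t.2.2
        ≤ max (w t.1 t.2.1 + w t.1 t.2.2) (max (w t.1 t.2.1 + w t.2.1 t.2.2)
          (w t.1 t.2.2 + w t.2.1 t.2.2))) := by
    rintro ⟨a, b, c⟩ ht
    simp only [hT3, Finset.mem_filter, Finset.mem_univ, true_and] at ht
    obtain ⟨hab, hbc⟩ := ht
    have hac : a < c := hab.trans hbc
    dsimp only
    rcases hone a b c hab.ne hbc.ne hac.ne with ⟨h1, h2, h3⟩ | ⟨h1, h2, h3⟩ | ⟨h1, h2, h3⟩ <;>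
    · simp only [hFdef, h1, h2, h3, hab.ne, hab.ne', hbc.ne, hbc.ne', hac.ne, hac.ne',
        not_true, not_false_iff, ne_eq, not_false_eq_true, and_true, true_and, and_false,
        false_and, if_true, if_false, ite_true, ite_false]
      constructor <;>
        linarith [min_le_left (w a b + w a c) (min (w a b + w b c) (w a c + w b c)),
          min_le_right (w a b + w a c) (min (w a b + w b c) (w a c + w b c)),
          min_le_left (w a b + w b c) (w a c + w b c),
          min_le_right (w a b + w b c) (w a c + w b c),
          le_max_left (w a b + w a c) (max (w a b + w b c) (w a c + w b c)),
          le_max_right (w a b + w a c) (max (w a b + w b c) (w a c + w b c)),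
          le_max_left (w a b + w b c) (w a c + w b c),
          le_max_right (w a b + w b c) (w a c + w b c)]
  have hmin : ∑ t ∈ T3, min (w t.1 t.2.1 + w t.1 t.2.2) (min (w t.1 t.2.1 + w t.2.1 t.2.2)
        (w t.1 t.2.2 + w t.2.1 t.2.2))
      ≤ ∑ t ∈ T3, (F t.2.1 t.2.2 t.1 + F t.1 t.2.2 t.2.1 + F t.1 t.2.1 t.2.2) :=
    Finset.sum_le_sum fun t ht => (hpt t ht).1
  have hmax : ∑ t ∈ T3, (F t.2.1 t.2.2 t.1 + F t.1 t.2.2 t.2.1 + F t.1 t.2.1 t.2.2)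
      ≤ ∑ t ∈ T3, max (w t.1 t.2.1 + w t.1 t.2.2) (max (w t.1 t.2.1 + w t.2.1 t.2.2)
        (w t.1 t.2.2 + w t.2.1 t.2.2)) :=
    Finset.sum_le_sum fun t ht => (hpt t ht).2
  constructor
  · rw [key]; linarith
  · rw [key]; linarith
end

section
/- Suppose every unit-weight edge of a tree T on n+1 nodes is scaled by a factor ζ > 0, and Z is an embedding of the scaled tree with multiplicative distortion at most 1+ε (i.e., ζ·d_T(i,j) ≤ d(z_i,z_j) ≤ ζ(1+ε)·d_T(i,j)), where d_o denotes continuous LCA depth satisfying the δ-hyperbolic Gromov-product bounds. Then for any leaves i,j,k with {i,j|k} in T: d_o(z_i∨z_j) − d_o(z_i∨z_k) ≥ ζ(1 − (3ε/2)n) − δ. In particular, choosing ε ≤ 1/(3n) gives d_o(z_i∨z_j) − d_o(z_i∨z_k) ≥ ζ/2 − δ. -/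
set_option maxHeartbeats 1600000


/-- Depth-difference separation for Sarkar embeddings of scaled trees.
`dT` is the (unit-weight) metric of a binary tree on leaves `0,…,n` with base leaf `0`;
every edge is scaled by `ζ > 0` and `Z` embeds the scaled tree with multiplicative
distortion at most `1+ε`: `ζ·dT i j ≤ d(z_i,z_j) ≤ ζ(1+ε)·dT i j`.  The scaled tree has
diameter at most `ζn` (encoded by `dT i j ≤ n`), scaled LCA depths
`d0T i j = ζ·(dT 0 i + dT 0 j − dT i j)/2`, and for a triple with `{i,j|k}` the internal
nodes are at scaled distance at least `ζ`, i.e. `d0T i j − d0T i k ≥ ζ`.  The continuous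
LCA depth `dO` satisfies the δ-hyperbolic Gromov-product bounds.  Then
`dO i j − dO i k ≥ ζ(1 − (3ε/2)n) − δ`; in particular, if `ε ≤ 1/(3n)` then
`dO i j − dO i k ≥ ζ/2 − δ`. -/
theorem sarkar_embedding_lca_separation {X : Type*} [MetricSpace X]
    (n : ℕ) (hn : 0 < n) (z : Fin (n + 1) → X)
    (dT : Fin (n + 1) → Fin (n + 1) → ℝ) (ζ ε δ : ℝ)
    (hζ : 0 < ζ) (hε : 0 ≤ ε) (hδ : 0 ≤ δ)
    (hdT : ∀ i j, 0 ≤ dT i j) (hdiam : ∀ i j, dT i j ≤ (n : ℝ))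
    (hquasi : ∀ i j, ζ * dT i j ≤ dist (z i) (z j) ∧
      dist (z i) (z j) ≤ ζ * (1 + ε) * dT i j)
    (dO : Fin (n + 1) → Fin (n + 1) → ℝ)
    (hgromov : ∀ i j,
      (dist (z i) (z 0) + dist (z j) (z 0) - dist (z i) (z j)) / 2 ≤ dO i j ∧
      dO i j ≤ (dist (z i) (z 0) + dist (z j) (z 0) - dist (z i) (z j)) / 2 + δ)
    (d0T : Fin (n + 1) → Fin (n + 1) → ℝ)
    (hd0T : ∀ i j, d0T i j = ζ * (dT 0 i + dT 0 j - dT i j) / 2) :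
    ∀ i j k : Fin (n + 1), i ≠ 0 → j ≠ 0 → k ≠ 0 →
      ζ ≤ d0T i j - d0T i k →
      (ζ * (1 - 3 * ε / 2 * (n : ℝ)) - δ ≤ dO i j - dO i k ∧
        (ε ≤ 1 / (3 * (n : ℝ)) → ζ / 2 - δ ≤ dO i j - dO i k)) := by
  intro i j k _ _ _ hsep
  have qi0 := hquasi i 0
  have qj0 := hquasi j 0
  have qk0 := hquasi k 0
  have qij := hquasi i j
  have qik := hquasi i k
  have gij := hgromov i j
  have gik := hgromov i k
  have hij := hd0T i j
  have hik := hd0T i k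
  have hdij := hdiam i j
  have hd0i := hdiam 0 i
  have hd0j := hdiam 0 j
  have hd0k := hdiam 0 k
  have hdik0 : 0 ≤ dT i k := hdT i k
  have hdij0 : 0 ≤ dT i j := hdT i j
  have hζε : 0 ≤ ζ * ε := mul_nonneg hζ.le hε
  have hsi : dist (z i) (z 0) = dist (z 0) (z i) := dist_comm _ _
  have hsj : dist (z j) (z 0) = dist (z 0) (z j) := dist_comm _ _
  have hsk : dist (z k) (z 0) = dist (z 0) (z k) := dist_comm _ _
  have hquasi0i := hquasi 0 i
  have hquasi0j := hquasi 0 j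
  have hquasi0k := hquasi 0 k
  have h1 : d0T i j - ζ * ε * (n : ℝ) / 2 ≤ dO i j := by
    nlinarith [mul_le_mul_of_nonneg_left hdij hζε, gij.1, qij.2, hquasi0i.1, hquasi0j.1]
  have h2 : dO i k ≤ d0T i k + ζ * ε * (n : ℝ) + δ := by
    nlinarith [mul_le_mul_of_nonneg_left hd0i hζε, mul_le_mul_of_nonneg_left hd0k hζε,
      gik.2, qik.1, hquasi0i.2, hquasi0k.2]
  have key : ζ * (1 - 3 * ε / 2 * (n : ℝ)) - δ ≤ dO i j - dO i k := by
    nlinarith [h1, h2, hsep]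
  refine ⟨key, fun hεn => ?_⟩
  have hn' : (0:ℝ) < 3 * (n:ℝ) := by positivity
  have h2 : ε * (3 * (n:ℝ)) ≤ 1 := by
    calc ε * (3 * (n:ℝ)) ≤ 1 / (3 * (n:ℝ)) * (3 * (n:ℝ)) := by
          exact mul_le_mul_of_nonneg_right hεn hn'.le
      _ = 1 := by field_simp
  nlinarith [key, mul_le_mul_of_nonneg_left h2 hζ.le]
end

section
/- Under the hypotheses of the main theorem — Z* the minimizer over spread embeddings 𝒵 of the continuous HypHC cost with temperature τ, T* the minimizer of Dasgupta's cost over binary trees, with (a) |C_Dasgupta(dec(Z);w) − C_HypHC(Z;w,τ)| ≤ 4e^{−1/τ}·Σ_{ijk} max{|w_{ij}|,|w_{ik}|,|w_{jk}|} for all Z ∈ 𝒵, and (b) existence of Z ∈ 𝒵 with dec(Z) = T* — and assuming C_Dasgupta(T*;w) ≥ Σ_{ijk} min{w_{ij}+w_{ik}, w_{ij}+w_{jk}, w_{ik}+w_{jk}} + 2Σ_{ij}w_{ij} > 0, the approximation ratio satisfies C_Dasgupta(dec(Z*);w)/C_Dasgupta(T*;w) ≤ 1 + 8e^{−1/τ}·(Σ_{ijk}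 max{w_{ij},w_{ik},w_{jk}})/C_Dasgupta(T*;w). -/
open Finset in
/-- Approximation-ratio theorem (abstract form).  `Z*` minimizes the continuous HypHC cost
over the set `𝒵` of spread embeddings and `T*` minimizes Dasgupta's cost over binary trees.
Assuming (a) for every `Z ∈ 𝒵` the decoded tree's discrete cost is within
`4e^{−1/τ}·Σ_{i<j<k} max{|w_{ij}|,|w_{ik}|,|w_{jk}|}` of the continuous cost, (b) some
`Z ∈ 𝒵` decodes to `T*`, and that Dasgupta's optimum is bounded below by the positive
quantity `Σ_{i<j<k} min{w_{ij}+w_{ik}, w_{ij}+w_{jk}, w_{ik}+w_{jk}} + 2Σ_{i<j} w_{ij}`,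
the approximation ratio satisfies
`C_D(dec Z*)/C_D(T*) ≤ 1 + 8e^{−1/τ}·(Σ_{i<j<k} max{w_{ij},w_{ik},w_{jk}})/C_D(T*)`. -/
theorem hyphc_approximation_ratio {Tree Emb : Type*}
    (n : ℕ) (w : Fin n → Fin n → ℝ) (hw : ∀ i j, 0 ≤ w i j) (τ : ℝ) (hτ : 0 < τ)
    (Cdisc : Tree → ℝ) (Ccont : Emb → ℝ) (dec : Emb → Tree) (Zset : Set Emb)
    (Zstar : Emb) (Tstar : Tree)
    (hZstar : Zstar ∈ Zset) (hZmin : ∀ Z ∈ Zset, Ccont Zstar ≤ Ccont Z)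
    (hTmin : ∀ T : Tree, Cdisc Tstar ≤ Cdisc T)
    (hclose : ∀ Z ∈ Zset, |Cdisc (dec Z) - Ccont Z| ≤
      4 * Real.exp (-1 / τ) *
        ∑ t ∈ (univ.filter fun t : Fin n × Fin n × Fin n => t.1 < t.2.1 ∧ t.2.1 < t.2.2),
          max |w t.1 t.2.1| (max |w t.1 t.2.2| |w t.2.1 t.2.2|))
    (hencode : ∃ Z ∈ Zset, dec Z = Tstar)
    (hLBpos : 0 <
      (∑ t ∈ (univ.filter fun t : Fin n × Fin n × Fin n => t.1 < t.2.1 ∧ t.2.1 < t.2.2),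
          min (w t.1 t.2.1 + w t.1 t.2.2)
            (min (w t.1 t.2.1 + w t.2.1 t.2.2) (w t.1 t.2.2 + w t.2.1 t.2.2)))
        + 2 * ∑ p ∈ (univ.filter fun p : Fin n × Fin n => p.1 < p.2), w p.1 p.2)
    (hLB :
      (∑ t ∈ (univ.filter fun t : Fin n × Fin n × Fin n => t.1 < t.2.1 ∧ t.2.1 < t.2.2),
          min (w t.1 t.2.1 + w t.1 t.2.2)
            (min (w t.1 t.2.1 + w t.2.1 t.2.2) (w t.1 t.2.2 + w t.2.1 t.2.2)))
        + 2 * ∑ p ∈ (univ.filter fun p : Fin n × Fin n => p.1 < p.2), w p.1 p.2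
        ≤ Cdisc Tstar) :
    Cdisc (dec Zstar) / Cdisc Tstar ≤
      1 + 8 * Real.exp (-1 / τ) *
        (∑ t ∈ (univ.filter fun t : Fin n × Fin n × Fin n => t.1 < t.2.1 ∧ t.2.1 < t.2.2),
          max (w t.1 t.2.1) (max (w t.1 t.2.2) (w t.2.1 t.2.2))) / Cdisc Tstar := by
  obtain ⟨Z, hZ, hdec⟩ := hencode
  have hC : 0 < Cdisc Tstar := lt_of_lt_of_le hLBpos hLB
  set S := ∑ t ∈ (univ.filter fun t : Fin n × Fin n × Fin n => t.1 < t.2.1 ∧ t.2.1 < t.2.2),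
      max (w t.1 t.2.1) (max (w t.1 t.2.2) (w t.2.1 t.2.2)) with hS
  have habs : (∑ t ∈ (univ.filter fun t : Fin n × Fin n × Fin n => t.1 < t.2.1 ∧ t.2.1 < t.2.2),
      max |w t.1 t.2.1| (max |w t.1 t.2.2| |w t.2.1 t.2.2|)) = S := by
    refine Finset.sum_congr rfl fun t _ => ?_
    rw [abs_of_nonneg (hw _ _), abs_of_nonneg (hw _ _), abs_of_nonneg (hw _ _)]
  set ε := 4 * Real.exp (-1 / τ) * S with hε
  have h1 : |Cdisc (dec Zstar) - Ccont Zstar| ≤ ε := by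
    have := hclose Zstar hZstar; rwa [habs] at this
  have h2 : |Cdisc (dec Z) - Ccont Z| ≤ ε := by
    have := hclose Z hZ; rwa [habs] at this
  have hkey : Cdisc (dec Zstar) ≤ Cdisc Tstar + 2 * ε := by
    have a1 : Cdisc (dec Zstar) ≤ Ccont Zstar + ε := by
      have := (abs_le.mp h1).2; linarith
    have a2 : Ccont Zstar ≤ Ccont Z := hZmin Z hZ
    have a3 : Ccont Z ≤ Cdisc (dec Z) + ε := by
      have := (abs_le.mp h2).1; linarith
    rw [hdec] at a3; linarith
  rw [div_le_iff₀ hC]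
  have heq : (1 + 8 * Real.exp (-1 / τ) * S / Cdisc Tstar) * Cdisc Tstar
      = Cdisc Tstar + 8 * Real.exp (-1 / τ) * S := by field_simp
  rw [heq, hε] at *
  linarith
end
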